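/- arXiv:1905.01340 — 4 statements merged into one kernel-verified Lean document; each statement's English description precedes it below -/
import Mathlib

section
/- The palindromic z-factorization of the Fibonacci word f is the sequence of singular words: pz(f) = (f̂_1, f̂_2, f̂_3, …). That is, f = f̂_1 f̂_2 f̂_3 ⋯ and, for every i ≥ 1, f̂_i is the shortest palindromic prefix of the suffix f̂_i f̂_{i+1} f̂_{i+2} ⋯ that has no occurrence in f at any position j < |f̂_1 f̂_2 ⋯ f̂_{i−1}|. -/
/-- The finite word `u` occurs at position `j` in the infinite word `w`. -/
def OccursAt (u : List ℕ) (w : ℕ → ℕ) (j : ℕ) : Prop :=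
  ∀ i < u.length, w (j + i) = u.getD i 0

/-- The finite word `u` is a prefix of the infinite word `w`. -/
def InfPrefix (u : List ℕ) (w : ℕ → ℕ) : Prop :=
  OccursAt u w 0

/-- The suffix of the infinite word `w` starting at position `j`. -/
def suffixFrom (w : ℕ → ℕ) (j : ℕ) : ℕ → ℕ :=
  fun i => w (j + i)

/-- The finite word `u` is a palindrome. -/
def Pal (u : List ℕ) : Prop := u.reverse = u
/-- The sequence `z` of finite words is the palindromic z-factorization of the
infinite word `w`: the partial concatenations are prefixes of `w` whose lengths tend to
infinity (so that `w = z 0 · z 1 · z 2 ⋯`), and each factor `z i` is the shortest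
non-empty palindromic prefix of the remaining suffix of `w` having no occurrence in `w`
at any position `j < |z 0 ⋯ z (i-1)|`. -/
def IsPalZFact (w : ℕ → ℕ) (z : ℕ → List ℕ) : Prop :=
  (∀ n, InfPrefix (((List.range n).map z).flatten) w) ∧
  (∀ N, ∃ n, N ≤ (((List.range n).map z).flatten).length) ∧
  (∀ i,
    z i ≠ [] ∧ Pal (z i) ∧
    InfPrefix (z i) (suffixFrom w (((List.range i).map z).flatten).length) ∧
    (¬ ∃ j < (((List.range i).map z).flatten).length, OccursAt (z i) w j) ∧
    (∀ u : List ℕ, u ≠ [] → Pal u →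
      InfPrefix u (suffixFrom w (((List.range i).map z).flatten).length) →
      (¬ ∃ j < (((List.range i).map z).flatten).length, OccursAt u w j) →
      (z i).length ≤ u.length))
/-- The Fibonacci morphism `φ : 0 ↦ 01, 1 ↦ 0` on letters. -/
def phiF (a : ℕ) : List ℕ := if a = 0 then [0, 1] else [0]

/-- The Fibonacci morphism applied to a finite word. -/
def phiFW (u : List ℕ) : List ℕ := u.flatMap phiF

/-- The iterates `h n = φⁿ(0)` of the Fibonacci morphism on `0`. -/
def fibh : ℕ → List ℕ
  | 0 => [0]
  | n + 1 => phiFW (fibh n)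

/-- The Fibonacci word, the infinite fixed point of `φ` beginning with `0`
(its `i`-th letter is the `i`-th letter of any sufficiently long iterate `φⁿ(0)`). -/
def fibWord : ℕ → ℕ := fun i => (fibh (i + 1)).getD i 0

/-- The singular words of the Fibonacci word:
`f̂ 0 = ε`, `f̂ 1 = 0`, `f̂ 2 = 1`, `f̂ 3 = 00`, and `f̂ n = f̂ (n-2) f̂ (n-3) f̂ (n-2)` for `n ≥ 4`. -/
def fhat : ℕ → List ℕ
  | 0 => []
  | 1 => [0]
  | 2 => [1]
  | 3 => [0, 0]
  | n + 4 => fhat (n + 2) ++ fhat (n + 1) ++ fhat (n + 2)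

/-!
Write `hₙ = φⁿ(0)`, so that `hₙ₊₂ = hₙ₊₁ hₙ`, `|hₙ| = F(n+2)` and `hₙ` contains `F(n)` letters `1`.
The words `hₙ₊₁ hₙ` and `hₙ hₙ₊₁` differ only in their last two letters, hence the prefix of `f`
of length `F(n+4) - 2` has period `F(n+2)`. The singular word `f̂ₙ₊₂` is `hₙ` with its last
letter `n mod 2` removed and the other letter prepended, and `f̂₁ ⋯ f̂ᵢ` is `hᵢ` without its last
letter, a prefix of `f` of length `F(i+2) - 1`.

By periodicity, every factor of length `F(n+2)` of that periodic prefix has as many `1`s as `hₙ`,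
namely `F(n)`, while `f̂ₙ₊₂` has `F(n) ± 1`; so `f̂ₙ₊₂` does not occur before position
`F(n+3) - 1`. Conversely, a shorter prefix of the suffix at position `F(n+3) - 1` reappears
`F(n+2)` positions earlier, again by periodicity.
-/

lemma occursAt_cons {a : ℕ} {u : List ℕ} {w : ℕ → ℕ} {j : ℕ} :
    OccursAt (a :: u) w j ↔ w j = a ∧ OccursAt u w (j + 1) := by
  refine ⟨fun h => ⟨by simpa using h 0 (by simp), fun i hi => ?_⟩, fun ⟨h0, h⟩ i hi => ?_⟩
  · have := h (i + 1) (by simpa using hi)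
    rwa [show j + (i + 1) = j + 1 + i by omega] at this
  · cases i with
    | zero => simpa using h0
    | succ i =>
      rw [show j + (i + 1) = j + 1 + i by omega]
      simpa using h i (by simpa using hi)

lemma infPrefix_suffixFrom_iff {u : List ℕ} {w : ℕ → ℕ} {j : ℕ} :
    InfPrefix u (suffixFrom w j) ↔ OccursAt u w j := by
  simp [InfPrefix, OccursAt, suffixFrom]

lemma List.IsPrefix.getD_eq {α : Type*} {l₁ l₂ : List α} (h : l₁ <+: l₂) {i : ℕ}
    (hi : i < l₁.length) (d : α) : l₂.getD i d = l₁.getD i d := by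
  obtain ⟨t, rfl⟩ := h
  exact List.getD_append _ _ _ _ hi

namespace OccursAt

variable {u v : List ℕ} {w : ℕ → ℕ} {j : ℕ}

lemma of_isPrefix (huv : u <+: v) (h : OccursAt v w j) : OccursAt u w j := fun i hi => by
  rw [h i (hi.trans_le huv.length_le), huv.getD_eq hi]

lemma right_of_append (h : OccursAt (u ++ v) w j) : OccursAt v w (j + u.length) :=
  fun i hi => by
    have := h (u.length + i) (by simp; omega)
    rwa [List.getD_append_right _ _ _ _ (by omega), Nat.add_sub_cancel_left,
      ← Nat.add_assoc] at this

lemma sum_eq (h : OccursAt u w j) : u.sum = ∑ t ∈ Finset.range u.length, w (j + t) := by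
  induction u generalizing j with
  | nil => simp
  | cons a u ih =>
    obtain ⟨ha, hu⟩ := occursAt_cons.1 h
    rw [List.sum_cons, List.length_cons, Finset.sum_range_succ', ih hu, ← ha, Nat.add_comm]
    simp only [Nat.add_zero, Nat.add_assoc, Nat.add_comm 1]

end OccursAt

def PeriodicOnPrefix {α : Type*} (w : ℕ → α) (p N : ℕ) : Prop :=
  ∀ i, i + p < N → w (i + p) = w i

namespace PeriodicOnPrefix

lemma sum_range_add {M : Type*} [AddCommMonoid M] {w : ℕ → M} {p N : ℕ}
    (hw : PeriodicOnPrefix w p N) {r : ℕ} (hr : r + p ≤ N) :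
    ∑ t ∈ Finset.range p, w (r + t) = ∑ t ∈ Finset.range p, w t := by
  induction r with
  | zero => simp
  | succ r ih =>
    rw [← ih (by omega)]
    cases p with
    | zero => simp
    | succ q =>
      rw [Finset.sum_range_succ, Finset.sum_range_succ' (fun t => w (r + t)),
        show r + 1 + q = r + (q + 1) by omega, hw r (by omega)]
      simp only [Nat.add_zero, Nat.add_assoc, Nat.add_comm 1]

variable {w : ℕ → ℕ} {p N : ℕ} {u : List ℕ} {j : ℕ}

lemma sum_eq_of_occursAt (hw : PeriodicOnPrefix w p N) (h : OccursAt u w j)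
    (hu : u.length = p) (hN : j + p ≤ N) : u.sum = ∑ t ∈ Finset.range p, w t := by
  rw [h.sum_eq, hu, hw.sum_range_add hN]

lemma occursAt_of_add (hw : PeriodicOnPrefix w p N) (h : OccursAt u w (j + p))
    (hN : j + p + u.length ≤ N) : OccursAt u w j := fun i hi => by
  rw [← h i hi, Nat.add_right_comm, hw (j + i) (by omega)]

end PeriodicOnPrefix

lemma lt_fib_add_two (n : ℕ) : n < Nat.fib (n + 2) := by
  induction n with
  | zero => simp
  | succ n ih =>
    show n + 1 < Nat.fib (n + 3)
    have hpos := Nat.fib_pos.2 (by omega : 0 < n + 1)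
    have hfib : Nat.fib (n + 3) = Nat.fib (n + 1) + Nat.fib (n + 2) := Nat.fib_add_two
    omega

lemma fibh_add_two (n : ℕ) : fibh (n + 2) = fibh (n + 1) ++ fibh n := by
  induction n with
  | zero => rfl
  | succ n ih =>
    change phiFW (fibh (n + 2)) = phiFW (fibh (n + 1)) ++ phiFW (fibh n)
    rw [ih, phiFW, List.flatMap_append]
    rfl

lemma length_fibh (n : ℕ) : (fibh n).length = Nat.fib (n + 2) := by
  induction n using Nat.strong_induction_on with
  | _ n ih =>
    match n with
    | 0 | 1 => rfl
    | n + 2 =>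
      rw [fibh_add_two, List.length_append, ih (n + 1) (by omega), ih n (by omega),
        Nat.fib_add_two (n := n + 2), Nat.add_comm]

lemma sum_fibh (n : ℕ) : (fibh n).sum = Nat.fib n := by
  induction n using Nat.strong_induction_on with
  | _ n ih =>
    match n with
    | 0 | 1 => rfl
    | n + 2 =>
      rw [fibh_add_two, List.sum_append, ih (n + 1) (by omega), ih n (by omega),
        Nat.fib_add_two, Nat.add_comm]

lemma fibh_ne_nil (n : ℕ) : fibh n ≠ [] :=
  List.ne_nil_of_length_pos (by rw [length_fibh]; exact Nat.fib_pos.2 (by omega))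

lemma fibh_eq_dropLast_append (n : ℕ) : fibh n = (fibh n).dropLast ++ [n % 2] := by
  induction n using Nat.strong_induction_on with
  | _ n ih =>
    match n with
    | 0 | 1 => rfl
    | n + 2 =>
      rw [fibh_add_two, List.dropLast_append_of_ne_nil (fibh_ne_nil n), List.append_assoc,
        Nat.add_mod_right, ← ih n (by omega)]

lemma fibh_isPrefix_fibh {m n : ℕ} (h : m ≤ n) : fibh m <+: fibh n := by
  induction n, h using Nat.le_induction with
  | base => exact List.prefix_rfl
  | succ n _ ih =>
    refine ih.trans ?_
    cases n with
    | zero => exact ⟨[1], rfl⟩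
    | succ n => rw [fibh_add_two]; exact List.prefix_append _ _

lemma infPrefix_fibh (n : ℕ) : InfPrefix (fibh n) fibWord := fun i hi => by
  have hi' : i < (fibh (i + 1)).length := by
    rw [length_fibh]
    exact (lt_fib_add_two i).trans_le Nat.fib_le_fib_succ
  rw [Nat.zero_add, fibWord,
    (fibh_isPrefix_fibh (le_max_right n (i + 1))).getD_eq hi' 0 |>.symm,
    (fibh_isPrefix_fibh (le_max_left n (i + 1))).getD_eq hi 0]

lemma exists_common_prefix_fibh (n : ℕ) : ∃ x : List ℕ, x.length + 2 = (fibh (n + 2)).length ∧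
    x <+: fibh (n + 1) ++ fibh n ∧ x <+: fibh n ++ fibh (n + 1) := by
  induction n with
  | zero => exact ⟨[0], rfl, ⟨[1, 0], rfl⟩, ⟨[0, 1], rfl⟩⟩
  | succ n ih =>
    obtain ⟨x, hlen, h₁, h₂⟩ := ih
    refine ⟨fibh (n + 1) ++ x, ?_, ?_, ?_⟩
    · rw [fibh_add_two (n + 1), List.length_append, List.length_append, ← hlen]
      omega
    · rw [fibh_add_two, List.append_assoc, List.prefix_append_right_inj]
      exact h₂
    · rw [fibh_add_two, List.prefix_append_right_inj]
      exact h₁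

lemma periodicOnPrefix_fibWord (n : ℕ) :
    PeriodicOnPrefix fibWord (Nat.fib (n + 2)) (Nat.fib (n + 4) - 2) := by
  obtain ⟨x, hlen, h₁, h₂⟩ := exists_common_prefix_fibh n
  have hx : InfPrefix x fibWord := (infPrefix_fibh (n + 2)).of_isPrefix (fibh_add_two n ▸ h₁)
  have hx_len : x.length + 2 = Nat.fib (n + 4) := by rw [hlen, length_fibh]
  intro i hi
  have hn := length_fibh n
  have hn₁ : (fibh (n + 1)).length = Nat.fib (n + 3) := length_fibh (n + 1)
  have hfib : Nat.fib (n + 4) = Nat.fib (n + 2) + Nat.fib (n + 3) := Nat.fib_add_two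
  have hw : ∀ q < x.length, fibWord q = x.getD q 0 := fun q hq => by simpa using hx q hq
  -- `f (i + |hₙ|) = (hₙ hₙ₊₁)[i + |hₙ|] = hₙ₊₁[i] = (hₙ₊₁ hₙ)[i] = f i`
  rw [hw _ (by omega), hw _ (by omega), ← h₂.getD_eq (by omega), ← h₁.getD_eq (by omega),
    ← hn, List.getD_append_right _ _ _ _ (by omega), Nat.add_sub_cancel,
    List.getD_append _ _ _ _ (by omega)]

lemma fhat_add_two (n : ℕ) : fhat (n + 2) = (n + 1) % 2 :: (fibh n).dropLast := by
  induction n using Nat.strong_induction_on with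
  | _ n ih =>
    match n with
    | 0 | 1 | 2 => rfl
    | m + 3 =>
      rw [show m + 3 + 2 = (m + 1) + 4 by rfl, fhat, ih (m + 1) (by omega), ih m (by omega),
        fibh_add_two (m + 1), List.dropLast_append_of_ne_nil (fibh_ne_nil (m + 1)),
        fibh_add_two m, fibh_eq_dropLast_append (m + 1), fibh_eq_dropLast_append m,
        List.dropLast_concat]
      have e₁ : (m + 3 + 1) % 2 = (m + 1 + 1) % 2 := by omega
      have e₂ : m % 2 = (m + 1 + 1) % 2 := by omega
      simp only [e₁, e₂, List.dropLast_concat, List.append_assoc, List.cons_append,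
        List.nil_append]

lemma length_fhat (n : ℕ) : (fhat (n + 1)).length = Nat.fib (n + 1) := by
  cases n with
  | zero => rfl
  | succ n =>
    have hpos := Nat.fib_pos.2 (by omega : 0 < n + 2)
    change (fhat (n + 2)).length = Nat.fib (n + 2)
    rw [fhat_add_two, List.length_cons, List.length_dropLast, length_fibh]
    omega

lemma reverse_fhat (n : ℕ) : (fhat n).reverse = fhat n := by
  induction n using Nat.strong_induction_on with
  | _ n ih =>
    match n with
    | 0 | 1 | 2 | 3 => rfl
    | m + 4 =>
      rw [fhat, List.reverse_append, List.reverse_append, ih (m + 2) (by omega),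
        ih (m + 1) (by omega), List.append_assoc]

lemma sum_fhat_add_two_ne (n : ℕ) : (fhat (n + 2)).sum ≠ Nat.fib n := by
  have h := congrArg List.sum (fibh_eq_dropLast_append n)
  rw [List.sum_append, List.sum_singleton, sum_fibh] at h
  rw [fhat_add_two, List.sum_cons]
  omega

lemma flatten_map_fhat (i : ℕ) :
    ((List.range i).map fun k => fhat (k + 1)).flatten = (fibh i).dropLast := by
  induction i with
  | zero => rfl
  | succ i ih =>
    rw [List.range_succ, List.map_append, List.flatten_append, ih]
    cases i with
    | zero => rfl
    | succ m =>
      rw [List.map_singleton, List.flatten_singleton, fhat_add_two, fibh_add_two,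
        List.dropLast_append_of_ne_nil (fibh_ne_nil m), fibh_eq_dropLast_append (m + 1),
        List.dropLast_concat, List.append_assoc, List.singleton_append]

lemma length_flatten_map_fhat (i : ℕ) :
    (((List.range i).map fun k => fhat (k + 1)).flatten).length = Nat.fib (i + 2) - 1 := by
  rw [flatten_map_fhat, List.length_dropLast, length_fibh]

lemma infPrefix_flatten_map_fhat (i : ℕ) :
    InfPrefix (((List.range i).map fun k => fhat (k + 1)).flatten) fibWord := by
  rw [flatten_map_fhat]
  exact (infPrefix_fibh i).of_isPrefix (List.dropLast_prefix _)

lemma not_occursAt_fhat {i j : ℕ} (hj : j < Nat.fib (i + 2) - 1) :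
    ¬ OccursAt (fhat (i + 1)) fibWord j := by
  cases i with
  | zero => simp at hj
  | succ k =>
    simp only [Nat.add_assoc, Nat.reduceAdd] at hj ⊢
    intro h
    have hfib : Nat.fib (k + 4) = Nat.fib (k + 2) + Nat.fib (k + 3) := Nat.fib_add_two
    apply sum_fhat_add_two_ne k
    rw [(periodicOnPrefix_fibWord k).sum_eq_of_occursAt h (length_fhat (k + 1)) (by omega),
      ← sum_fibh k, (infPrefix_fibh k).sum_eq, length_fibh]
    simp only [Nat.zero_add]

lemma exists_occursAt_lt_of_length_lt {i : ℕ} {u : List ℕ} (hu : u ≠ [])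
    (hlen : u.length < Nat.fib (i + 1)) (h : OccursAt u fibWord (Nat.fib (i + 2) - 1)) :
    ∃ j < Nat.fib (i + 2) - 1, OccursAt u fibWord j := by
  cases i with
  | zero => simp_all
  | succ k =>
    simp only [Nat.add_assoc, Nat.reduceAdd] at hlen h ⊢
    have hfib₃ : Nat.fib (k + 3) = Nat.fib (k + 1) + Nat.fib (k + 2) := Nat.fib_add_two
    have hfib₄ : Nat.fib (k + 4) = Nat.fib (k + 2) + Nat.fib (k + 3) := Nat.fib_add_two
    have hpos := Nat.fib_pos.2 (by omega : 0 < k + 1)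
    refine ⟨Nat.fib (k + 1) - 1, by omega, (periodicOnPrefix_fibWord k).occursAt_of_add ?_ ?_⟩
    · rwa [show Nat.fib (k + 1) - 1 + Nat.fib (k + 2) = Nat.fib (k + 3) - 1 by omega]
    · omega

/-- The palindromic z-factorization of the Fibonacci word is the sequence of
singular words: `pz(f) = (f̂₁, f̂₂, f̂₃, …)`. -/
theorem fib_pal_z_factorization :
    IsPalZFact fibWord (fun i => fhat (i + 1)) := by
  refine ⟨infPrefix_flatten_map_fhat, fun N => ⟨N, ?_⟩, fun i => ?_⟩
  · rw [length_flatten_map_fhat]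
    have := lt_fib_add_two N
    omega
  have hsplit : ((List.range (i + 1)).map fun k => fhat (k + 1)).flatten =
      ((List.range i).map fun k => fhat (k + 1)).flatten ++ fhat (i + 1) := by
    simp [List.range_succ]
  have hpos : 0 < (fhat (i + 1)).length := by rw [length_fhat]; exact Nat.fib_pos.2 (by omega)
  refine ⟨List.ne_nil_of_length_pos hpos, reverse_fhat _, ?_, ?_, fun u hu _ hpre hnot => ?_⟩
  · have h := (hsplit ▸ infPrefix_flatten_map_fhat (i + 1)).right_of_append
    rwa [Nat.zero_add, ← infPrefix_suffixFrom_iff] at h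
  · rw [length_flatten_map_fhat]
    exact fun ⟨j, hj, h⟩ => not_occursAt_fhat hj h
  · change (fhat (i + 1)).length ≤ u.length
    rw [length_flatten_map_fhat, infPrefix_suffixFrom_iff] at hpre
    rw [length_flatten_map_fhat] at hnot
    by_contra hlt
    exact hnot (exists_occursAt_lt_of_length_lt hu (by rw [← length_fhat]; omega) hpre)
end

section
/- For all n ≥ 2, the prefix g_n of the Fibonacci word satisfies g_n = f̂_1 f̂_2 ⋯ f̂_{n−1} f̂_n f̂_{n−1} f̂_{n−2}. -/
/-- For `n ≥ 2`, the prefix `g_n = 010 · ∏_{2 ≤ k ≤ n-1} f̂_{k-1} f̂_k f̂_{k-1}`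
of the Fibonacci word. -/
def gFib (n : ℕ) : List ℕ :=
  [0, 1, 0] ++
    (((List.range (n - 2)).map (fun j => fhat (j + 1) ++ fhat (j + 2) ++ fhat (j + 1))).flatten)


lemma fhat_succ3 (m : ℕ) : fhat (m + 3) = fhat (m + 1) ++ fhat m ++ fhat (m + 1) := by
  match m with
  | 0 => rfl
  | k + 1 => rfl

/-- For all `n ≥ 2`, `g_n = f̂₁ f̂₂ ⋯ f̂_{n-1} f̂_n f̂_{n-1} f̂_{n-2}`. -/
theorem gFib_eq_singular_prod (n : ℕ) (hn : 2 ≤ n) :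
    gFib n = (((List.range (n - 1)).map (fun j => fhat (j + 1))).flatten)
      ++ fhat n ++ fhat (n - 1) ++ fhat (n - 2) := by
  induction n, hn using Nat.le_induction with
  | base => rfl
  | succ n hn ih =>
    obtain ⟨m, rfl⟩ := Nat.exists_eq_add_of_le hn
    rw [show 2 + m = m + 2 by omega] at ih ⊢
    rw [show m + 2 + 1 = m + 3 by omega]
    have h1 : m + 3 - 2 = m + 1 := by omega
    have h2 : m + 3 - 1 = m + 2 := by omega
    have h3 : m + 2 - 2 = m := by omega
    have h4 : m + 2 - 1 = m + 1 := by omega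
    simp only [gFib, h1, h2, h3, h4, List.range_succ, List.map_append, List.flatten_append,
      List.map_cons, List.map_nil, List.flatten_cons, List.flatten_nil,
      ← List.append_assoc, List.append_nil] at ih ⊢
    rw [ih, show m + 1 + 1 = m + 2 by omega, fhat_succ3]
    simp [List.append_assoc]
end

section
/- Let m ≥ 2 and let x, y be finite words over {0,1,…,m−1}. (1) If φ_m(x)·0 is a factor of φ_m(y)·0, then x is a factor of y. (2) If φ_m(x) is a factor of φ_m(y) and x does not end with the letter m−1, then x is a factor of y. -/
/-!
Every block `φ_m(a)` is `0` followed by a word `t(a)` that is empty or a single nonzero letter,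
and `t` is injective. So the letter `0` marks the start of each block: an occurrence of
`φ_m(x)·0` in `φ_m(y)·0` begins at a block boundary, and from there the blocks of `x` are read
off one by one from those of `y`. For (2), a nonzero letter of `φ_m(y)` is followed by `0` or
ends the word; if `x` does not end with `m-1`, then `φ_m(x)` ends with a nonzero letter, so its
occurrence in `φ_m(y)` extends to one of `φ_m(x)·0` in `φ_m(y)·0`.
-/

/-- The `m`-bonacci morphism `φ_m` on letters:
`φ_m(k) = 0·(k+1)` for `0 ≤ k ≤ m-2`, and `φ_m(m-1) = 0`. -/
def phiL (m a : ℕ) : List ℕ := if a = m - 1 then [0] else [0, a + 1]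

/-- The `m`-bonacci morphism applied to a finite word. -/
def phiW (m : ℕ) (u : List ℕ) : List ℕ := u.flatMap (phiL m)

/-- The iterates `h n = φ_mⁿ(0)`. -/
def hword (m : ℕ) : ℕ → List ℕ
  | 0 => [0]
  | n + 1 => phiW m (hword m n)

/-- The `m`-bonacci word, the infinite fixed point of `φ_m` beginning with `0`
(its `i`-th letter is the `i`-th letter of any sufficiently long iterate `φ_mⁿ(0)`). -/
def mbon (m : ℕ) : ℕ → ℕ := fun i => (hword m (i + 1)).getD i 0

/-- Auxiliary course-of-values construction for the p-singular words:
`zsAux m (k+1) i` gives the correct value of the (index-shifted) p-singular word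
`z_{i-1}` for every `i ≤ k`. -/
def zsAux (m : ℕ) : ℕ → ℕ → List ℕ
  | 0, _ => []
  | k + 1, i =>
    if i < k then zsAux m k i
    else if i = 0 then []
    else if i = 1 then [0]
    else if i ≤ m then
      -- here `i = n+1` with `1 ≤ n ≤ m-1`:
      -- `z_n = z_{n-2} z_{n-3} ⋯ z_1 z_0 · n · z_0 z_1 ⋯ z_{n-3} z_{n-2}`
      (((List.range (i - 2)).map (fun j => zsAux m k (i - 2 - j))).flatten)
        ++ [i - 1]
        ++ (((List.range (i - 2)).map (fun j => zsAux m k (1 + j))).flatten)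
    else
      -- here `i = n+1` with `n ≥ m`:
      -- `z_n = z_{n-2} ⋯ z_{n-(m-1)} · z_{n-m} · z_{n-(m+1)} · z_{n-m} · z_{n-(m-1)} ⋯ z_{n-2}`
      (((List.range (m - 2)).map (fun j => zsAux m k (i - 2 - j))).flatten)
        ++ zsAux m k (i - m) ++ zsAux m k (i - m - 1) ++ zsAux m k (i - m)
        ++ (((List.range (m - 2)).map (fun j => zsAux m k (i - m + 1 + j))).flatten)

/-- The (index-shifted) p-singular words for the `m`-bonacci word:
`zsw m 0 = z₋₁ = ε`, and `zsw m (n+1) = zₙ` for `n ≥ 0`, where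
`z₀ = 0`, `zₙ = z_{n-2} z_{n-3} ⋯ z_1 z_0 · n · z_0 z_1 ⋯ z_{n-3} z_{n-2}` for `1 ≤ n ≤ m-1`
(`n` denoting the single letter `n`), and
`zₙ = z_{n-2} z_{n-3} ⋯ z_{n-(m-1)} z_{n-m} z_{n-(m+1)} z_{n-m} z_{n-(m-1)} ⋯ z_{n-3} z_{n-2}`
for `n ≥ m`. -/
def zsw (m k : ℕ) : List ℕ := zsAux m (k + 1) k

namespace List

variable {α : Type*}

theorem suffix_of_cons_suffix_append {c : α} {r u w : List α} (hc : c ∉ u)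
    (h : c :: r <:+ u ++ w) : c :: r <:+ w := by
  obtain ⟨t, ht⟩ := h
  rcases append_eq_append_iff.mp ht with ⟨_ | ⟨d, u'⟩, rfl, hw⟩ | ⟨t', -, hw⟩
  · exact hw ▸ suffix_refl _
  · cases hw
    exact absurd (mem_append_right t mem_cons_self) hc
  · exact ⟨t', hw.symm⟩

theorem append_cons_inj_of_notMem_left {c : α} {u v p q : List α}
    (hu : c ∉ u) (hv : c ∉ v) (h : u ++ c :: p = v ++ c :: q) : u = v ∧ p = q := by
  classical
  have hlen : u.length = v.length := by
    simpa [idxOf_append_of_notMem hu, idxOf_append_of_notMem hv] using congrArg (idxOf c) h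
  obtain ⟨huv, hpq⟩ := append_inj h hlen
  exact ⟨huv, (cons.inj hpq).2⟩

end List

def markedCode {α β : Type*} (c : β) (g : α → List β) (x : List α) : List β :=
  x.flatMap fun a => c :: g a

namespace markedCode

variable {α β : Type*} (c : β) (g : α → List β)

@[simp] theorem nil : markedCode c g [] = [] := rfl

@[simp] theorem cons (a : α) (x : List α) :
    markedCode c g (a :: x) = c :: (g a ++ markedCode c g x) := by
  simp [markedCode]

theorem exists_append_marker_eq_cons (x : List α) : ∃ r, markedCode c g x ++ [c] = c :: r := by
  cases x <;> simp

variable {c g}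

theorem exists_suffix_of_cons_suffix (hg : ∀ a, c ∉ g a) {y : List α} {r : List β}
    (h : c :: r <:+ markedCode c g y ++ [c]) :
    ∃ z, z <:+ y ∧ markedCode c g z ++ [c] = c :: r := by
  induction y with
  | nil => exact ⟨[], List.suffix_refl _, ((List.suffix_cons_iff.mp h).resolve_right (by simp)).symm⟩
  | cons b y ih =>
    rw [cons, List.cons_append, List.append_assoc] at h
    rcases List.suffix_cons_iff.mp h with h | h
    · exact ⟨b :: y, List.suffix_refl _, by simpa using h.symm⟩
    · obtain ⟨z, hz, hzr⟩ := ih (List.suffix_of_cons_suffix_append (hg b) h)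
      exact ⟨z, hz.trans (List.suffix_cons b y), hzr⟩

theorem prefix_of_append_marker_prefix (hg : ∀ a, c ∉ g a)
    (hinj : Function.Injective g) {x y : List α}
    (h : markedCode c g x ++ [c] <+: markedCode c g y ++ [c]) : x <+: y := by
  induction x generalizing y with
  | nil => exact List.nil_prefix
  | cons a x ih =>
    cases y with
    | nil => simpa using h.length_le
    | cons b y =>
      obtain ⟨r, hr⟩ := exists_append_marker_eq_cons c g x
      obtain ⟨s, hs⟩ := exists_append_marker_eq_cons c g y
      obtain ⟨t, ht⟩ := h
      have hcode : g a ++ c :: (r ++ t) = g b ++ c :: s := by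
        simp only [cons, List.cons_append, List.append_assoc] at ht
        rw [← List.cons_append, ← hr, ← hs]
        simpa using ht
      obtain ⟨hab, hrs⟩ := List.append_cons_inj_of_notMem_left (hg a) (hg b) hcode
      rw [hinj hab, List.cons_prefix_cons]
      exact ⟨rfl, ih ⟨t, by rw [hr, hs, List.cons_append, hrs]⟩⟩

theorem infix_of_append_marker_infix (hg : ∀ a, c ∉ g a)
    (hinj : Function.Injective g) {x y : List α}
    (h : markedCode c g x ++ [c] <:+: markedCode c g y ++ [c]) : x <:+: y := by
  obtain ⟨s, t, hst⟩ := h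
  obtain ⟨r, hr⟩ := exists_append_marker_eq_cons c g x
  obtain ⟨z, hzy, hz⟩ := exists_suffix_of_cons_suffix hg (r := r ++ t) ⟨s, by simpa [hr] using hst⟩
  have hxz : x <+: z := prefix_of_append_marker_prefix hg hinj ⟨t, by rw [hz, hr, List.cons_append]⟩
  exact hxz.isInfix.trans hzy.isInfix

end markedCode

def phiTail (m a : ℕ) : List ℕ := if a = m - 1 then [] else [a + 1]

theorem phiL_eq_cons_phiTail (m a : ℕ) : phiL m a = 0 :: phiTail m a := by
  unfold phiL phiTail
  split <;> rfl

theorem phiW_eq_markedCode (m : ℕ) (x : List ℕ) : phiW m x = markedCode 0 (phiTail m) x := by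
  unfold phiW markedCode
  congr 1
  exact funext (phiL_eq_cons_phiTail m)

theorem zero_notMem_phiTail (m a : ℕ) : 0 ∉ phiTail m a := by
  unfold phiTail
  split <;> simp

theorem phiTail_injective (m : ℕ) : Function.Injective (phiTail m) := by
  intro a b hab
  unfold phiTail at hab
  split at hab <;> split at hab <;> simp_all

theorem infix_of_phiW_append_zero_infix {m : ℕ} {x y : List ℕ}
    (h : phiW m x ++ [0] <:+: phiW m y ++ [0]) : x <:+: y := by
  simp only [phiW_eq_markedCode] at h
  exact markedCode.infix_of_append_marker_infix (zero_notMem_phiTail m) (phiTail_injective m) h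

theorem isChain_phiW_append_zero (m : ℕ) (y : List ℕ) :
    (phiW m y ++ [0]).IsChain fun d e => d ≠ 0 → e = 0 := by
  induction y with
  | nil => simp [phiW]
  | cons b y ih =>
    obtain ⟨r, hr⟩ := markedCode.exists_append_marker_eq_cons 0 (phiTail m) y
    rw [← phiW_eq_markedCode] at hr
    rw [phiW, List.flatMap_cons, ← phiW, List.append_assoc]
    refine List.IsChain.append ?_ ih ?_
    · unfold phiL
      split <;> simp
    · simp [hr]

theorem append_zero_infix_of_infix_phiW {m d : ℕ} {u y : List ℕ} (hd : d ≠ 0)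
    (h : u ++ [d] <:+: phiW m y) : u ++ [d, 0] <:+: phiW m y ++ [0] := by
  obtain ⟨s, t, hst⟩ := h
  cases t with
  | nil => exact ⟨s, [], by simp [← hst]⟩
  | cons e t =>
    have hde : [d, e] <:+: phiW m y ++ [0] := ⟨s ++ u, t ++ [0], by simp [← hst]⟩
    have he : e = 0 := by
      simpa [hd] using (isChain_phiW_append_zero m y).infix hde
    exact ⟨s, t ++ [0], by simp [← hst, he]⟩

theorem phiW_infix_general (m : ℕ) (x y : List ℕ) :
    ((phiW m x ++ [0]) <:+: (phiW m y ++ [0]) → x <:+: y) ∧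
    (phiW m x <:+: phiW m y → x.getLast? ≠ some (m - 1) → x <:+: y) := by
  refine ⟨infix_of_phiW_append_zero_infix, fun h hlast => ?_⟩
  rcases x.eq_nil_or_concat' with rfl | ⟨x, a, rfl⟩
  · exact List.nil_infix
  have ha : a ≠ m - 1 := by simpa using hlast
  have hx : phiW m (x ++ [a]) = (phiW m x ++ [0]) ++ [a + 1] := by
    simp [phiW, phiL, ha]
  rw [hx] at h
  exact infix_of_phiW_append_zero_infix (m := m)
    (by simpa [hx] using append_zero_infix_of_infix_phiW a.succ_ne_zero h)

/-- Let `m ≥ 2` and let `x, y` be finite words over `{0,1,…,m-1}`.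
(1) If `φ_m(x)·0` is a factor of `φ_m(y)·0`, then `x` is a factor of `y`.
(2) If `φ_m(x)` is a factor of `φ_m(y)` and `x` does not end with the letter `m-1`,
then `x` is a factor of `y`. -/
theorem phiW_infix (m : ℕ) (hm : 2 ≤ m) (x y : List ℕ)
    (hx : ∀ a ∈ x, a < m) (hy : ∀ a ∈ y, a < m) :
    ((phiW m x ++ [0]) <:+: (phiW m y ++ [0]) → x <:+: y) ∧
    (phiW m x <:+: phiW m y → x.getLast? ≠ some (m - 1) → x <:+: y) :=
  phiW_infix_general m x y
end

section
/- For all n ≥ 0, the p-singular words satisfy: φ_m(z_{n−1}) = 0 · z_n if n is odd, and z_n = φ_m(z_{n−1}) · 0 if n is even. -/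
lemma zsAux_lt (m k i : ℕ) (h : i < k) : zsAux m (k+1) i = zsAux m k i := by
  rw [zsAux]; simp [h]

lemma zsAux_eq_zsw (m : ℕ) : ∀ (k i : ℕ), i < k → zsAux m k i = zsw m i := by
  intro k
  induction k with
  | zero => omega
  | succ k ih =>
    intro i h
    rcases Nat.lt_or_ge i k with h' | h'
    · rw [zsAux_lt m k i h', ih i h']
    · have : i = k := by omega
      subst this; rfl

lemma zsw_zero (m : ℕ) : zsw m 0 = [] := by rw [zsw, zsAux]; simp

lemma zsw_one (m : ℕ) : zsw m 1 = [0] := by rw [zsw, zsAux]; simp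

def blockD (m c t : ℕ) : List ℕ := ((List.range t).map (fun j => zsw m (c - j))).flatten
def blockI (m c t : ℕ) : List ℕ := ((List.range t).map (fun j => zsw m (c + j))).flatten


lemma flatten_map_congr (f g : ℕ → List ℕ) (t : ℕ) (h : ∀ j < t, f j = g j) :
    ((List.range t).map f).flatten = ((List.range t).map g).flatten := by
  congr 1
  apply List.map_congr_left
  intro j hj
  exact h j (List.mem_range.mp hj)

lemma zsw_mid (m k : ℕ) (h2 : 2 ≤ k) (hk : k ≤ m) :
    zsw m k = blockD m (k-2) (k-2) ++ [k-1] ++ blockI m 1 (k-2) := by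
  rw [zsw, zsAux]
  have c1 : ¬ k < k := lt_irrefl k
  have c2 : k ≠ 0 := by omega
  have c3 : k ≠ 1 := by omega
  rw [if_neg c1, if_neg c2, if_neg c3, if_pos hk]
  rw [blockD, blockI,
    flatten_map_congr (fun j => zsAux m k (k - 2 - j)) (fun j => zsw m (k - 2 - j)) (k-2)
      (fun j hj => zsAux_eq_zsw m k _ (by omega)),
    flatten_map_congr (fun j => zsAux m k (1 + j)) (fun j => zsw m (1 + j)) (k-2)
      (fun j hj => zsAux_eq_zsw m k _ (by omega))]

lemma zsw_high (m k : ℕ) (hm : 2 ≤ m) (hk : m < k) :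
    zsw m k = blockD m (k-2) (m-2) ++ zsw m (k-m) ++ zsw m (k-m-1) ++ zsw m (k-m)
      ++ blockI m (k-m+1) (m-2) := by
  rw [zsw, zsAux]
  have c1 : ¬ k < k := lt_irrefl k
  have c2 : k ≠ 0 := by omega
  have c3 : k ≠ 1 := by omega
  have c4 : ¬ k ≤ m := by omega
  rw [if_neg c1, if_neg c2, if_neg c3, if_neg c4]
  rw [zsAux_eq_zsw m k (k-m) (by omega), zsAux_eq_zsw m k (k-m-1) (by omega)]
  rw [blockD, blockI,
    flatten_map_congr (fun j => zsAux m k (k - 2 - j)) (fun j => zsw m (k - 2 - j)) (m-2)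
      (fun j hj => zsAux_eq_zsw m k _ (by omega)),
    flatten_map_congr (fun j => zsAux m k (k - m + 1 + j)) (fun j => zsw m (k - m + 1 + j)) (m-2)
      (fun j hj => zsAux_eq_zsw m k _ (by omega))]

def eps (n : ℕ) : List ℕ := if n % 2 = 1 then [0] else []

lemma eps_congr {a b : ℕ} (h : a % 2 = b % 2) : eps a = eps b := by unfold eps; rw [h]

lemma eps_even {a : ℕ} (h : a % 2 = 0) : eps a = [] := by simp [eps, h]

lemma eps_odd {a : ℕ} (h : a % 2 = 1) : eps a = [0] := by simp [eps, h]

lemma phiW_append (m : ℕ) (u v : List ℕ) : phiW m (u ++ v) = phiW m u ++ phiW m v := by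
  simp [phiW]

lemma blockD_succ (m c t : ℕ) : blockD m c (t+1) = blockD m c t ++ zsw m (c - t) := by
  simp [blockD, List.range_succ]

lemma blockI_succ (m c t : ℕ) : blockI m c (t+1) = blockI m c t ++ zsw m (c + t) := by
  simp [blockI, List.range_succ]

lemma blockI_front (m c t : ℕ) : blockI m c (t+1) = zsw m c ++ blockI m (c+1) t := by
  rw [blockI, List.range_succ_eq_map]
  simp only [List.map_cons, List.map_map, List.flatten_cons, Function.comp]
  rw [blockI]
  congr 1
  exact flatten_map_congr _ _ t
    (fun j _ => by simp only [Function.comp]; congr 1; omega)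

lemma block_zero_D (m c : ℕ) : blockD m c 0 = [] := rfl
lemma block_zero_I (m c : ℕ) : blockI m c 0 = [] := rfl

lemma teleI (m N : ℕ)
    (H : ∀ j, j ≤ N → phiW m (zsw m j) ++ eps (j+1) = eps j ++ zsw m (j+1)) :
    ∀ t a, a + t ≤ N + 1 →
      phiW m (blockI m a t) ++ eps (a+t) = eps a ++ blockI m (a+1) t := by
  intro t
  induction t with
  | zero => intro a _; simp [block_zero_I, phiW]
  | succ t ih =>
    intro a ha
    rw [blockI_succ, phiW_append, List.append_assoc,
      eps_congr (show (a+(t+1)) % 2 = (a+t+1) % 2 by omega), H (a+t) (by omega),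
      ← List.append_assoc, ih a (by omega), blockI_succ,
      show a + 1 + t = a + t + 1 by omega]
    simp [List.append_assoc]

lemma teleD (m N : ℕ)
    (H : ∀ j, j ≤ N → phiW m (zsw m j) ++ eps (j+1) = eps j ++ zsw m (j+1)) :
    ∀ t c, t ≤ c → c ≤ N →
      phiW m (blockD m c t) ++ eps (c+t) = eps c ++ blockD m (c+1) t := by
  intro t
  induction t with
  | zero => intro c _ _; simp [block_zero_D, phiW]
  | succ t ih =>
    intro c htc hc
    rw [blockD_succ, phiW_append, List.append_assoc,
      eps_congr (show (c+(t+1)) % 2 = (c-t+1) % 2 by omega),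
      H (c-t) (by omega),
      eps_congr (show (c-t) % 2 = (c+t) % 2 by omega),
      ← List.append_assoc, ih c (by omega) hc, blockD_succ]
    rw [show c + 1 - t = c - t + 1 by omega]
    simp [List.append_assoc]

lemma chain {X e Y : List ℕ} (h : X ++ e = Y) (r : List ℕ) : X ++ (e ++ r) = Y ++ r := by
  rw [← List.append_assoc, h]

lemma phiW_single (m a : ℕ) : phiW m [a] = phiL m a := by simp [phiW]

lemma key (m : ℕ) (hm : 2 ≤ m) (n : ℕ) :
    phiW m (zsw m n) ++ eps (n+1) = eps n ++ zsw m (n+1) := by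
  induction n using Nat.strong_induction_on with
  | _ n IH =>
  rcases Nat.lt_or_ge n 2 with hn2 | hn2
  · interval_cases n
    · rw [zsw_zero, zsw_one]
      simp [phiW, eps]
    · rw [zsw_one, zsw_mid m 2 le_rfl hm]
      rw [phiW_single, phiL, if_neg (by omega)]
      simp [blockD, blockI, eps]
  · have H : ∀ j, j ≤ n - 1 → phiW m (zsw m j) ++ eps (j+1) = eps j ++ zsw m (j+1) :=
      fun j hj => IH j (by omega)
    rcases Nat.lt_or_ge n m with hnm | hnm
    · -- case (a): 2 ≤ n ≤ m - 1
      rw [zsw_mid m n (by omega) (by omega), zsw_mid m (n+1) (by omega) (by omega)]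
      rw [show n+1-2 = n-1 by omega, show n+1-1 = n by omega]
      rw [phiW_append, phiW_append, phiW_single, phiL, if_neg (by omega),
        show n-1+1 = n by omega]
      have hD : phiW m (blockD m (n-2) (n-2)) = eps (n-2) ++ blockD m (n-1) (n-2) := by
        have h := teleD m (n-1) H (n-2) (n-2) le_rfl (by omega)
        rw [eps_even (show ((n-2)+(n-2)) % 2 = 0 by omega), List.append_nil,
          show n-2+1 = n-1 by omega] at h
        exact h
      have hI : phiW m (blockI m 1 (n-2)) ++ eps (n+1) = [0] ++ blockI m 2 (n-2) := by
        have h := teleI m (n-1) H (n-2) 1 (by omega)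
        rw [eps_congr (show (1+(n-2)) % 2 = (n+1) % 2 by omega),
          eps_odd (show 1 % 2 = 1 by omega)] at h
        exact h
      have hR1 : blockD m (n-1) (n-1) = blockD m (n-1) (n-2) ++ [0] := by
        rw [show n-1 = (n-2)+1 by omega, blockD_succ,
          show n-2+1-(n-2) = 1 by omega, zsw_one]
      have hR2 : blockI m 1 (n-1) = [0] ++ blockI m 2 (n-2) := by
        rw [show n-1 = (n-2)+1 by omega, blockI_front, zsw_one]
      rw [hR1, hR2]
      simp only [List.append_assoc]
      rw [hI, hD, eps_congr (show (n-2) % 2 = n % 2 by omega)]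
      simp
    rcases Nat.eq_or_lt_of_le hnm with hnm | hnm
    · -- case (b): n = m
      subst hnm
      rw [zsw_mid m m (by omega) le_rfl, zsw_high m (m+1) hm (by omega)]
      rw [show m+1-2 = m-1 by omega, show m+1-m = 1 by omega,
        show (1:ℕ)-1 = 0 by omega, show (1:ℕ)+1 = 2 by omega, zsw_one, zsw_zero]
      rw [phiW_append, phiW_append, phiW_single, phiL, if_pos rfl]
      have hD : phiW m (blockD m (m-2) (m-2)) = eps (m-2) ++ blockD m (m-1) (m-2) := by
        have h := teleD m (m-1) H (m-2) (m-2) le_rfl (by omega)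
        rw [eps_even (show ((m-2)+(m-2)) % 2 = 0 by omega), List.append_nil,
          show m-2+1 = m-1 by omega] at h
        exact h
      have hI : phiW m (blockI m 1 (m-2)) ++ eps (m+1) = [0] ++ blockI m 2 (m-2) := by
        have h := teleI m (m-1) H (m-2) 1 (by omega)
        rw [eps_congr (show (1+(m-2)) % 2 = (m+1) % 2 by omega),
          eps_odd (show 1 % 2 = 1 by omega)] at h
        exact h
      simp only [List.append_assoc]
      rw [hI, hD, eps_congr (show (m-2) % 2 = m % 2 by omega)]
      simp
    · -- case (c): n ≥ m + 1
      rw [zsw_high m n hm hnm, zsw_high m (n+1) hm (by omega)]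
      rw [show n+1-2 = n-1 by omega, show n+1-m = n-m+1 by omega,
        show n-m+1-1 = n-m by omega, show n-m+1+1 = n-m+2 by omega]
      rw [phiW_append, phiW_append, phiW_append, phiW_append]
      have hD : phiW m (blockD m (n-2) (m-2)) ++ eps (n-m) =
          eps (n-2) ++ blockD m (n-1) (m-2) := by
        have h := teleD m (n-1) H (m-2) (n-2) (by omega) (by omega)
        rw [eps_congr (show ((n-2)+(m-2)) % 2 = (n-m) % 2 by omega),
          show n-2+1 = n-1 by omega] at h
        exact h
      have hI : phiW m (blockI m (n-m+1) (m-2)) ++ eps (n+1) =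
          eps (n-m+1) ++ blockI m (n-m+2) (m-2) := by
        have h := teleI m (n-1) H (m-2) (n-m+1) (by omega)
        rw [eps_congr (show ((n-m+1)+(m-2)) % 2 = (n+1) % 2 by omega),
          show n-m+1+1 = n-m+2 by omega] at h
        exact h
      have h2 : phiW m (zsw m (n-m)) ++ eps (n-m+1) = eps (n-m) ++ zsw m (n-m+1) :=
        H (n-m) (by omega)
      have h3 : phiW m (zsw m (n-m-1)) ++ eps (n-m) = eps (n-m+1) ++ zsw m (n-m) := by
        have h := H (n-m-1) (by omega)
        rw [show n-m-1+1 = n-m by omega,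
          eps_congr (show (n-m-1) % 2 = (n-m+1) % 2 by omega)] at h
        exact h
      simp only [List.append_assoc]
      rw [hI, chain h2]
      simp only [List.append_assoc]
      rw [chain h3]
      simp only [List.append_assoc]
      rw [chain h2]
      simp only [List.append_assoc]
      rw [chain hD, eps_congr (show (n-2) % 2 = n % 2 by omega)]
      simp

/-- For all `n ≥ 0`: if `n` is odd then `φ_m(z_{n-1}) = 0 · zₙ`, and if `n` is even then
`zₙ = φ_m(z_{n-1}) · 0` (recall `zₙ = zsw m (n+1)`, `z_{n-1} = zsw m n`). -/
theorem psingular_phi (m : ℕ) (hm : 2 ≤ m) (n : ℕ) :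
    (Odd n → phiW m (zsw m n) = 0 :: zsw m (n + 1)) ∧
    (Even n → zsw m (n + 1) = phiW m (zsw m n) ++ [0]) := by
  have h := key m hm n
  constructor
  · intro ho
    have h1 : n % 2 = 1 := Nat.odd_iff.mp ho
    rw [eps_odd h1, eps_even (by omega), List.append_nil] at h
    rw [h]; rfl
  · intro he
    have h1 : n % 2 = 0 := Nat.even_iff.mp he
    rw [eps_even h1, eps_odd (by omega), List.nil_append] at h
    exact h.symm
end
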